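/- Let T_i be a rooted binary phylogenetic tree on leaf set Y_i with root y_i, evolving under the symmetric 4-state model N_4, and suppose y_i is attached below a node ρ by an edge on which one specific state change occurs with probability p_i ∈ [0,1/4]. Writing P_(A)(Y_i) = P(MP(f_{Y_i}, T_i) = A | ρ = α) for the probability, conditional on ρ being in state α, that the Fitch algorithm assigns the set A at y_i, one has 4·P_(α)(Y_i) + 6·P_(αβ)(Y_i) + 4·P_(αβγ)(Y_i) + P_(αβγδ)(Y_i) = 4·(p_i + (1 − 4p_i)·RA(Y_i)), where RA(Y_i) is the reconstruction accuracy of the Fitch algorithm on T_i. -/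

import Mathlib

/-- A rooted binary phylogenetic tree: a `leaf` is a single taxon, and the
root of `node p₁ p₂ L R` has the roots of `L` and `R` as its two children,
attached by edges carrying one-specific-change probabilities `p₁` and `p₂`. -/
inductive PhyloTree : Type
  | leaf : PhyloTree
  | node (p₁ p₂ : ℝ) (L R : PhyloTree) : PhyloTree

namespace PhyloTree

/-- The number of leaves (taxa) of the tree. -/
def nLeaves : PhyloTree → ℕ
  | leaf => 1
  | node _ _ L R => nLeaves L + nLeaves R

/-- All edge substitution probabilities of the tree lie in `[0, 1/4]`. -/
def valid : PhyloTree → Prop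
  | leaf => True
  | node p₁ p₂ L R => 0 ≤ p₁ ∧ p₁ ≤ 1/4 ∧ 0 ≤ p₂ ∧ p₂ ≤ 1/4 ∧ valid L ∧ valid R

end PhyloTree

/-- Transition probabilities of the symmetric 4-state model `N₄`: conditional
on the upper endpoint of an edge with substitution probability `q` being in
state `a`, the lower endpoint is in each specific state `b ≠ a` with
probability `q`, and in state `a` with probability `1 - 3q`. -/
noncomputable def trans4 (q : ℝ) (a b : Fin 4) : ℝ := if a = b then 1 - 3*q else q

/-- `charProb4 t a f` is the probability, conditional on the root of `t`
being in state `a`, that the leaves of `t` (read from left to right) are in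
the states recorded by the list `f`.  States evolve independently along the
edges according to `trans4`. -/
noncomputable def charProb4 : PhyloTree → Fin 4 → List (Fin 4) → ℝ
  | .leaf, a, f => if f = [a] then 1 else 0
  | .node p₁ p₂ L R, a, f =>
      ∑ b : Fin 4, ∑ c : Fin 4, trans4 p₁ a b * trans4 p₂ a c *
        charProb4 L b (f.take L.nLeaves) * charProb4 R c (f.drop L.nLeaves)

/-- Fitch's parsimony operation: `A ∩ B` if it is nonempty, `A ∪ B` otherwise. -/
def fitchOp {k : ℕ} (A B : Finset (Fin k)) : Finset (Fin k) :=
  if (A ∩ B).Nonempty then A ∩ B else A ∪ B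

/-- The set `MP(f,T)` assigned to the root of `t` by the Fitch algorithm when
the leaves carry the character (list of leaf states) `f`. -/
def fitchSet4 : PhyloTree → List (Fin 4) → Finset (Fin 4)
  | .leaf, [b] => {b}
  | .leaf, _ => ∅
  | .node _ _ L R, f =>
      fitchOp (fitchSet4 L (f.take L.nLeaves)) (fitchSet4 R (f.drop L.nLeaves))

/-- `rootProb4 t a R = P(MP(f,T) = R ∣ root state = a)`. -/
noncomputable def rootProb4 (t : PhyloTree) (a : Fin 4) (R : Finset (Fin 4)) : ℝ :=
  ∑ f : Fin t.nLeaves → Fin 4,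
    if fitchSet4 t (List.ofFn f) = R then charProb4 t a (List.ofFn f) else 0

/-- The reconstruction accuracy
`RA(X) = ∑_{R ⊆ A, α ∈ R} (1/|R|) · P(MP(f,T) = R ∣ ρ = α)`, with `α := 0`. -/
noncomputable def RA4 (t : PhyloTree) : ℝ :=
  ∑ R : Finset (Fin 4),
    if (0 : Fin 4) ∈ R then (R.card : ℝ)⁻¹ * rootProb4 t 0 R else 0

/-- `ultra4 t p`: the tree `t` is ultrametric, and the probability of one
specific state change from the root to any leaf is `p` (under `N₄`, the
one-specific-change probabilities compose along a path as
`p₁ ∘ q₁ = p₁ + q₁ - 4·p₁·q₁`). -/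
def ultra4 : PhyloTree → ℝ → Prop
  | .leaf, p => p = 0
  | .node p₁ p₂ L R, p => ∃ q₁ q₂, ultra4 L q₁ ∧ ultra4 R q₂ ∧
      p = p₁ + q₁ - 4*p₁*q₁ ∧ p = p₂ + q₂ - 4*p₂*q₂

/-- `PParen4 t pᵢ A = P_{(A)}(Yᵢ)`: the probability, conditional on the node
`ρ` above the root `yᵢ` of `t` being in state `α = 0`, that the Fitch
algorithm assigns the set `A` at `yᵢ`, where the edge from `ρ` to `yᵢ`
carries one-specific-change probability `pᵢ`. -/
noncomputable def PParen4 (t : PhyloTree) (pi : ℝ) (A : Finset (Fin 4)) : ℝ :=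
  ∑ b : Fin 4, trans4 pi 0 b * rootProb4 t b A
/-!
Up to the factor `4`, the left-hand side is `∑_{A ∋ α} P_(A)(Yᵢ) / |A|`: the law of the Fitch set
at `yᵢ` is invariant under the permutations of the states fixing `α`, and there are
`(4/k)·C(3,k-1) = C(4,k)` sets of size `k` containing `α`. That sum is the probability that Fitch
with uniform tie-breaking at `yᵢ` guesses `α`. Conditioning on the state `b` of `yᵢ`, it is
`∑_b P(ρ=α → yᵢ=b) · g(b, α)`, where `g(b, a)` is the probability of guessing `a` at the root of `Tᵢ`
when it is in state `b`. Swapping `a` and `b` shows `g(b, α) = g(α, b)`, and `∑_b g(α, b) = 1`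
because the Fitch set is never empty, so with `g(α, α) = RA(Yᵢ)` the edge contributes
`(1 - 3pᵢ)·RA(Yᵢ) + pᵢ·(1 - RA(Yᵢ))`.
-/

open Finset

lemma sum_trans4_mul (q : ℝ) (a : Fin 4) (g : Fin 4 → ℝ) :
    ∑ b, trans4 q a b * g b = q * ∑ b, g b + (1 - 4 * q) * g a := by
  fin_cases a <;> simp [trans4, Fin.sum_univ_four] <;> ring

lemma sum_trans4 (q : ℝ) (a : Fin 4) : ∑ b, trans4 q a b = 1 := by
  fin_cases a <;> simp [trans4, Fin.sum_univ_four] <;> ring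

lemma trans4_perm (σ : Equiv.Perm (Fin 4)) (q : ℝ) (a b : Fin 4) :
    trans4 q (σ a) (σ b) = trans4 q a b := by
  simp [trans4, σ.injective.eq_iff]

lemma charProb4_map_perm (σ : Equiv.Perm (Fin 4)) :
    ∀ (t : PhyloTree) (a : Fin 4) (f : List (Fin 4)),
      charProb4 t (σ a) (f.map σ) = charProb4 t a f
  | .leaf, a, f => by
      have : f.map σ = [σ a] ↔ f = [a] := by
        rw [← List.map_singleton, (List.map_injective_iff.2 σ.injective).eq_iff]
      simp only [charProb4, this]
  | .node p₁ p₂ L R, a, f => by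
      simp only [charProb4]
      rw [← Equiv.sum_comp σ]
      refine sum_congr rfl fun b _ => ?_
      rw [← Equiv.sum_comp σ]
      refine sum_congr rfl fun c _ => ?_
      rw [trans4_perm, trans4_perm, ← List.map_take, ← List.map_drop,
        charProb4_map_perm σ L, charProb4_map_perm σ R]

lemma fitchOp_image {k m : ℕ} {f : Fin k → Fin m} (hf : Function.Injective f)
    (A B : Finset (Fin k)) : fitchOp (A.image f) (B.image f) = (fitchOp A B).image f := by
  have hinter : A.image f ∩ B.image f = (A ∩ B).image f := (image_inter _ _ hf).symm
  unfold fitchOp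
  by_cases h : (A ∩ B).Nonempty
  · simp only [hinter, image_nonempty, if_pos h]
  · simp only [hinter, image_nonempty, if_neg h, image_union]

lemma fitchSet4_map_perm (σ : Equiv.Perm (Fin 4)) :
    ∀ (t : PhyloTree) (f : List (Fin 4)),
      fitchSet4 t (f.map σ) = (fitchSet4 t f).image σ
  | .leaf, [] => rfl
  | .leaf, [b] => by simp [fitchSet4]
  | .leaf, _ :: _ :: _ => rfl
  | .node _ _ L R, f => by
      simp only [fitchSet4]
      rw [← List.map_take, ← List.map_drop, fitchSet4_map_perm σ L, fitchSet4_map_perm σ R,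
        fitchOp_image σ.injective]

lemma fitchSet4_nonempty : ∀ (t : PhyloTree) (f : List (Fin 4)),
    f.length = t.nLeaves → (fitchSet4 t f).Nonempty
  | .leaf, [b], _ => singleton_nonempty b
  | .node _ _ L R, f, h => by
      have hL := fitchSet4_nonempty L (f.take L.nLeaves) (by simp [h, PhyloTree.nLeaves])
      simp only [fitchSet4, fitchOp]
      split_ifs with hLR
      · exact hLR
      · exact hL.mono subset_union_left

lemma charProb4_node_append (p₁ p₂ : ℝ) (L R : PhyloTree) (a : Fin 4)
    (g : Fin L.nLeaves → Fin 4) (h : Fin R.nLeaves → Fin 4) :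
    charProb4 (.node p₁ p₂ L R) a (List.ofFn g ++ List.ofFn h) =
      (∑ b, trans4 p₁ a b * charProb4 L b (List.ofFn g)) *
        ∑ c, trans4 p₂ a c * charProb4 R c (List.ofFn h) := by
  rw [charProb4, List.take_left' List.length_ofFn, List.drop_left' List.length_ofFn, sum_mul_sum]
  refine sum_congr rfl fun b _ => sum_congr rfl fun c _ => ?_
  ring

lemma sum_charProb4 : ∀ (t : PhyloTree) (a : Fin 4),
    ∑ f : Fin t.nLeaves → Fin 4, charProb4 t a (List.ofFn f) = 1
  | .leaf, a => by
      change ∑ f : Fin 1 → Fin 4, charProb4 .leaf a (List.ofFn f) = 1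
      rw [← (Equiv.funUnique (Fin 1) (Fin 4)).symm.sum_comp]
      simp [charProb4, List.ofFn_succ]
  | .node p₁ p₂ L R, a => by
      change ∑ f : Fin (L.nLeaves + R.nLeaves) → Fin 4,
        charProb4 (.node p₁ p₂ L R) a (List.ofFn f) = 1
      rw [← (Fin.appendEquiv _ _).sum_comp, Fintype.sum_prod_type]
      simp only [Fin.appendEquiv, Equiv.coe_fn_mk, List.ofFn_fin_append, charProb4_node_append,
        ← mul_sum, ← sum_mul]
      rw [sum_comm, sum_comm (s := univ (α := Fin R.nLeaves → Fin 4))]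
      simp only [← mul_sum, sum_charProb4, mul_one, sum_trans4]

lemma rootProb4_image_perm (σ : Equiv.Perm (Fin 4)) (t : PhyloTree) (a : Fin 4)
    (R : Finset (Fin 4)) : rootProb4 t (σ a) (R.image σ) = rootProb4 t a R := by
  unfold rootProb4
  rw [← ((Equiv.refl _).arrowCongr σ).sum_comp]
  refine sum_congr rfl fun f _ => ?_
  have hmap : List.ofFn ((Equiv.refl _).arrowCongr σ f) = (List.ofFn f).map σ := by
    rw [List.map_ofFn]; rfl
  simp only [hmap, fitchSet4_map_perm, charProb4_map_perm, (image_injective σ.injective).eq_iff]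

lemma sum_rootProb4 (t : PhyloTree) (a : Fin 4) : ∑ R, rootProb4 t a R = 1 := by
  unfold rootProb4
  rw [sum_comm]
  simp only [sum_ite_eq, mem_univ, if_true]
  exact sum_charProb4 t a

lemma rootProb4_empty (t : PhyloTree) (a : Fin 4) : rootProb4 t a ∅ = 0 :=
  sum_eq_zero fun f _ =>
    if_neg (fitchSet4_nonempty t _ (List.length_ofFn (f := f))).ne_empty

/-- The probability that the Fitch algorithm, breaking ties uniformly at random, reconstructs
state `b` at the root of `t` when the root is in state `a`; `RA4 t = fitchGuessProb t 0 0`. -/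
noncomputable def fitchGuessProb (t : PhyloTree) (a b : Fin 4) : ℝ :=
  ∑ R : Finset (Fin 4), if b ∈ R then (#R : ℝ)⁻¹ * rootProb4 t a R else 0

lemma fitchGuessProb_perm (σ : Equiv.Perm (Fin 4)) (t : PhyloTree) (a b : Fin 4) :
    fitchGuessProb t (σ a) (σ b) = fitchGuessProb t a b := by
  unfold fitchGuessProb
  rw [← σ.finsetCongr.sum_comp]
  refine sum_congr rfl fun R _ => ?_
  simp only [Equiv.finsetCongr_apply, map_eq_image, Equiv.coe_toEmbedding,
    σ.injective.mem_finset_image, card_image_of_injective _ σ.injective, rootProb4_image_perm]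

lemma fitchGuessProb_comm (t : PhyloTree) (a b : Fin 4) :
    fitchGuessProb t a b = fitchGuessProb t b a := by
  simpa using (fitchGuessProb_perm (Equiv.swap a b) t a b).symm

lemma sum_fitchGuessProb (t : PhyloTree) (a : Fin 4) : ∑ b, fitchGuessProb t a b = 1 := by
  unfold fitchGuessProb
  rw [sum_comm, ← sum_rootProb4 t a]
  refine sum_congr rfl fun R _ => ?_
  rw [sum_ite_mem, univ_inter, sum_const, nsmul_eq_mul]
  rcases R.eq_empty_or_nonempty with rfl | hR
  · simp [rootProb4_empty]
  · field_simp [hR.card_pos.ne']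

lemma PParen4_image_perm (σ : Equiv.Perm (Fin 4)) (hσ : σ 0 = 0) (t : PhyloTree) (p : ℝ)
    (A : Finset (Fin 4)) : PParen4 t p (A.image σ) = PParen4 t p A := by
  unfold PParen4
  rw [← Equiv.sum_comp σ]
  refine sum_congr rfl fun b _ => ?_
  rw [← hσ, trans4_perm, rootProb4_image_perm, hσ]

lemma sum_inv_card_PParen4 (t : PhyloTree) (p : ℝ) :
    ∑ R : Finset (Fin 4), (if (0 : Fin 4) ∈ R then (#R : ℝ)⁻¹ * PParen4 t p R else 0) =
      ∑ b, trans4 p 0 b * fitchGuessProb t b 0 := by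
  simp only [PParen4, fitchGuessProb, mul_sum, mul_ite, mul_zero]
  rw [sum_comm]
  refine sum_congr rfl fun R _ => ?_
  split_ifs
  · exact sum_congr rfl fun b _ => by ring
  · exact sum_const_zero.symm

lemma four_mul_sum_inv_card_of_invariant (h : Finset (Fin 4) → ℝ)
    (hh : ∀ σ : Equiv.Perm (Fin 4), σ 0 = 0 → ∀ A, h (A.image σ) = h A) :
    4 * ∑ R : Finset (Fin 4), (if (0 : Fin 4) ∈ R then (#R : ℝ)⁻¹ * h R else 0) =
      4 * h {0} + 6 * h {0, 1} + 4 * h {0, 1, 2} + h {0, 1, 2, 3} := by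
  have himage (σ : Equiv.Perm (Fin 4)) (hσ : σ 0 = 0) (A B : Finset (Fin 4))
      (hAB : A.image σ = B) : h B = h A := hAB ▸ hh σ hσ A
  have h02 := himage (Equiv.swap 1 2) rfl {0, 1} {0, 2} (by decide)
  have h03 := himage (Equiv.swap 1 3) rfl {0, 1} {0, 3} (by decide)
  have h013 := himage (Equiv.swap 2 3) rfl {0, 1, 2} {0, 1, 3} (by decide)
  have h023 := himage (Equiv.swap 1 3) rfl {0, 1, 2} {0, 2, 3} (by decide)
  have hfilter : univ.filter (fun R : Finset (Fin 4) => 0 ∈ R) =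
      {{0}, {0, 1}, {0, 2}, {0, 3}, {0, 1, 2}, {0, 1, 3}, {0, 2, 3}, {0, 1, 2, 3}} := by decide
  rw [← sum_filter, hfilter]
  repeat rw [sum_insert (by decide)]
  rw [sum_singleton, h02, h03, h013, h023]
  simp only [card_singleton, Nat.cast_one, inv_one, one_mul, mem_singleton, zero_ne_one,
    not_false_eq_true, card_insert_of_notMem, Nat.reduceAdd, Nat.cast_ofNat, Fin.reduceEq,
    mem_insert, or_self]
  ring

theorem PParen4_RA_identity_general (t : PhyloTree) (pi : ℝ) :
    4 * PParen4 t pi {0} + 6 * PParen4 t pi {0, 1}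
      + 4 * PParen4 t pi {0, 1, 2} + PParen4 t pi {0, 1, 2, 3}
      = 4 * (pi + (1 - 4*pi) * RA4 t) := by
  calc _ = 4 * ∑ b, trans4 pi 0 b * fitchGuessProb t b 0 := by
        rw [← four_mul_sum_inv_card_of_invariant _ fun σ hσ => PParen4_image_perm σ hσ t pi,
          sum_inv_card_PParen4]
    _ = 4 * ∑ b, trans4 pi 0 b * fitchGuessProb t 0 b := by simp only [fitchGuessProb_comm t _ 0]
    _ = 4 * (pi + (1 - 4*pi) * RA4 t) := by rw [sum_trans4_mul, sum_fitchGuessProb, mul_one]; rfl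

/-- With `Tᵢ` a rooted binary tree on leaf set `Yᵢ` whose
root `yᵢ` is attached below a node `ρ` by an edge with one-specific-change
probability `pᵢ ∈ [0,1/4]`,
`4·P_(α)(Yᵢ) + 6·P_(αβ)(Yᵢ) + 4·P_(αβγ)(Yᵢ) + P_(αβγδ)(Yᵢ)
  = 4·(pᵢ + (1 - 4pᵢ)·RA(Yᵢ))`. -/
theorem PParen4_RA_identity (t : PhyloTree) (pi : ℝ) (h₀ : 0 ≤ pi)
    (h₁ : pi ≤ 1/4) (hv : t.valid) :
    4 * PParen4 t pi {0} + 6 * PParen4 t pi {0, 1}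
      + 4 * PParen4 t pi {0, 1, 2} + PParen4 t pi {0, 1, 2, 3}
      = 4 * (pi + (1 - 4*pi) * RA4 t) :=
  PParen4_RA_identity_general t pi
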